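/- arXiv:2604.16217 — 2 statements merged into one kernel-verified Lean document; each statement's English description precedes it below -/
import Mathlib

section
/- Let s : Fin (N+1) → ℝ ∪ {∞} and let 1 ≤ k ≤ N+1. Let q_full denote the k-th smallest value of the full multiset {s_1, …, s_{N+1}}, and let q_loo denote the k-th smallest value of the multiset {s_1, …, s_N, ∞} obtained by replacing the last entry with ∞. Then s_{N+1} ≤ q_loo if and only if s_{N+1} ≤ q_full. -/
/-- In a sorted list, `x ≤ l[i]` iff the number of elements `< x` is at most `i`. -/
lemma sorted_le_getD_iff (x : WithTop ℝ) :
    ∀ (l : List (WithTop ℝ)), l.Pairwise (· ≤ ·) → ∀ i : ℕ, i < l.length →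
      (x ≤ l.getD i ⊤ ↔ l.countP (fun y => decide (y < x)) ≤ i) := by
  intro l
  induction l with
  | nil => intro _ i hi; simp at hi
  | cons a t ih =>
    intro hs i hi
    rcases List.pairwise_cons.mp hs with ⟨ha, ht⟩
    cases i with
    | zero =>
      simp only [List.getD_cons_zero, List.countP_cons, Nat.le_zero, Nat.add_eq_zero]
      constructor
      · intro hxa
        constructor
        · exact List.countP_eq_zero.mpr fun y hy => by
            simp only [decide_eq_true_eq]
            exact not_lt.mpr (hxa.trans (ha y hy))
        · simp [not_lt.mpr hxa]
      · rintro ⟨-, h2⟩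
        by_contra hx
        push_neg at hx
        simp [hx] at h2
    | succ i =>
      have hi' : i < t.length := by simpa using Nat.lt_of_succ_lt_succ hi
      simp only [List.getD_cons_succ, List.countP_cons]
      by_cases hax : a < x
      · rw [ih ht i hi']
        simp [hax]
      · have hxa : x ≤ a := not_lt.mp hax
        have hct : t.countP (fun y => decide (y < x)) = 0 :=
          List.countP_eq_zero.mpr fun y hy => by
            simp only [decide_eq_true_eq]
            exact not_lt.mpr (hxa.trans (ha y hy))
        have hget : x ≤ t.getD i ⊤ := by
          rw [List.getD_eq_getElem t ⊤ hi']
          exact hxa.trans (ha _ (List.getElem_mem hi'))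
        rw [if_neg (by simpa using hax), hct]
        constructor
        · intro _; omega
        · intro _; exact hget

/-- The `k`-th smallest value (k-th order statistic, `1 ≤ k ≤ n`) of the multiset
`{s 1, …, s n}` of values in `ℝ ∪ {∞}`: the entry at position `k` (counted with
multiplicity) when the values are sorted in nondecreasing order. -/
noncomputable def orderStat {n : ℕ} (s : Fin n → WithTop ℝ) (k : ℕ) : WithTop ℝ :=
  ((Multiset.map s Finset.univ.val).sort (· ≤ ·)).getD (k - 1) ⊤

/-- For `s : Fin (N+1) → ℝ ∪ {∞}` and `1 ≤ k ≤ N+1`, let `q_full` be the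
`k`-th smallest value of the full multiset `{s 1, …, s (N+1)}` and let `q_loo` be the
`k`-th smallest value of the leave-one-out multiset `{s 1, …, s N, ∞}` obtained by
replacing the last entry with `∞`. Then `s (N+1) ≤ q_loo ↔ s (N+1) ≤ q_full`. -/
theorem le_loo_orderStat_iff_le_full_orderStat (N : ℕ) (s : Fin (N + 1) → WithTop ℝ)
    (k : ℕ) (hk1 : 1 ≤ k) (hk2 : k ≤ N + 1) :
    s (Fin.last N) ≤ orderStat (Function.update s (Fin.last N) ⊤) k ↔
      s (Fin.last N) ≤ orderStat s k := by
  set x := s (Fin.last N) with hx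
  have hmem : Fin.last N ∈ (Finset.univ : Finset (Fin (N + 1))).val := Finset.mem_univ_val _
  set m := (Finset.univ : Finset (Fin (N + 1))).val.erase (Fin.last N) with hm
  have hcons : (Finset.univ : Finset (Fin (N + 1))).val = Fin.last N ::ₘ m :=
    (Multiset.cons_erase hmem).symm
  have hne : ∀ y ∈ m, y ≠ Fin.last N := by
    intro y hy hcontra
    subst hcontra
    exact (Finset.univ : Finset (Fin (N + 1))).nodup.not_mem_erase hy
  have hmapfull : Multiset.map s (Finset.univ : Finset (Fin (N + 1))).val
      = x ::ₘ Multiset.map s m := by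
    rw [hcons, Multiset.map_cons]
  have hmaploo : Multiset.map (Function.update s (Fin.last N) ⊤)
      (Finset.univ : Finset (Fin (N + 1))).val = (⊤ : WithTop ℝ) ::ₘ Multiset.map s m := by
    rw [hcons, Multiset.map_cons, Function.update_self]
    congr 1
    exact Multiset.map_congr rfl fun y hy => Function.update_of_ne (hne y hy) _ _
  have hcount : Multiset.countP (fun y => y < x)
        (Multiset.map (Function.update s (Fin.last N) ⊤) (Finset.univ : Finset (Fin (N + 1))).val)
      = Multiset.countP (fun y => y < x)
        (Multiset.map s (Finset.univ : Finset (Fin (N + 1))).val) := by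
    rw [hmapfull, hmaploo, Multiset.countP_cons, Multiset.countP_cons]
    simp [lt_irrefl, not_top_lt]
  have hcard : ∀ t : Fin (N + 1) → WithTop ℝ,
      (Multiset.map t (Finset.univ : Finset (Fin (N + 1))).val).card = N + 1 := by
    intro t
    simp
  have key : ∀ t : Fin (N + 1) → WithTop ℝ,
      (x ≤ orderStat t k ↔
        Multiset.countP (fun y => y < x)
          (Multiset.map t (Finset.univ : Finset (Fin (N + 1))).val) ≤ k - 1) := by
    intro t
    set M := Multiset.map t (Finset.univ : Finset (Fin (N + 1))).val with hM
    have hlen : (M.sort (· ≤ ·)).length = N + 1 := by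
      rw [Multiset.length_sort]; exact hcard t
    have hkk : k - 1 < (M.sort (· ≤ ·)).length := by omega
    rw [orderStat, ← hM,
      sorted_le_getD_iff x (M.sort (· ≤ ·)) (Multiset.pairwise_sort _ _) (k - 1) hkk]
    have : Multiset.countP (fun y => y < x) M
        = (M.sort (· ≤ ·)).countP (fun y => decide (y < x)) := by
      conv_lhs => rw [← Multiset.sort_eq M (· ≤ ·)]
      rw [Multiset.coe_countP]
    rw [this]
  rw [key, key, hcount]
end

section
/- Marginal validity of split conformal prediction on sampled candidate pools: Let 𝒜 be a countable discrete type of answer units, X a measurable space of questions, and Y a measurable space of ground-truth answers. Let A : X → Finset 𝒜 be a measurable candidate-set map, F : 𝒜 × X → ℝ a measurable reliability score, and adm ⊆ 𝒜 × Y a measurable admissibility relation; write A*(x,y) = {a ∈ A(x) : adm(a,y)}. Let (X_1,Y_1), …, (X_{N+1},Y_{N+1}) be an exchangeable sequence of X×Y-valued random pairs such that almost surely A*(X_i,Y_i) ≠ ∅ for every i. Define the nonconformity scores s_i = 1 − max_{a ∈ A*(X_i,Y_i)} F(a, X_i), fix α ∈ (0,1), set k = ⌈(N+1)(1−α)⌉,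 and let q̂_α be the k-th smallest value of the multiset {s_1, …, s_N, ∞}. Then P( ∃ a ∈ A(X_{N+1}) with adm(a, Y_{N+1}) and 1 − F(a, X_{N+1}) ≤ q̂_α ) ≥ 1 − α; that is, with probability at least 1 − α the conformal prediction set Ĉ_α(X_{N+1}) = {a ∈ A(X_{N+1}) : 1 − F(a, X_{N+1}) ≤ q̂_α} contains an admissible answer. -/
open MeasureTheory

/-- A random vector `Z = (Z_1, …, Z_n)` on a probability space is *exchangeable* if its
joint law (the pushforward measure on the product space) is invariant under every
permutation of the coordinates. -/
def Exchangeable {Ω : Type*} [MeasurableSpace Ω] {E : Type*} [MeasurableSpace E] {n : ℕ}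
    (P : Measure Ω) (Z : Ω → Fin n → E) : Prop :=
  ∀ σ : Equiv.Perm (Fin n), Measure.map (fun ω => Z ω ∘ σ) P = Measure.map Z P

/-- The admissible subset `A*(x,y) = {a ∈ A x : adm a y}` of the sampled candidate pool. -/
def admissibleSet {𝒜 X Y : Type*} (A : X → Finset 𝒜)
    (adm : 𝒜 → Y → Prop) [∀ a y, Decidable (adm a y)] (x : X) (y : Y) : Finset 𝒜 :=
  (A x).filter fun a => adm a y

/-- The nonconformity score `s = 1 - max_{a ∈ A*(x,y)} F (a, x)` when the admissible
subset is nonempty, and `s = ∞` otherwise. -/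
noncomputable def ncScore {𝒜 X Y : Type*} (A : X → Finset 𝒜) (F : 𝒜 × X → ℝ)
    (adm : 𝒜 → Y → Prop) [∀ a y, Decidable (adm a y)] (x : X) (y : Y) : WithTop ℝ :=
  if h : (admissibleSet A adm x y).Nonempty then
    (((1 - (admissibleSet A adm x y).sup' h fun a => F (a, x) : ℝ)) : WithTop ℝ)
  else ⊤
private lemma sorted_getD_iff {α : Type*} [LinearOrder α] [OrderTop α]
    (L : List α) (hL : L.Pairwise (· ≤ ·)) (v : α) (i : ℕ) :
    v ≤ L.getD i ⊤ ↔ L.countP (fun x => decide (x < v)) ≤ i := by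
  induction L generalizing i with
  | nil => simp [List.getD]
  | cons a L ih =>
    rw [List.pairwise_cons] at hL
    obtain ⟨ha, hL'⟩ := hL
    cases i with
    | zero =>
      rw [List.getD_cons_zero, List.countP_cons]
      constructor
      · intro hva
        have h1 : ¬ (a < v) := not_lt.mpr hva
        have h0 : L.countP (fun x => decide (x < v)) = 0 :=
          List.countP_eq_zero.mpr (fun x hx => by
            simp only [decide_eq_true_eq]
            exact not_lt.mpr (hva.trans (ha x hx)))
        simp [h0, h1]
      · intro h
        by_contra hva
        simp [not_le.mp hva] at h
    | succ i =>
      rw [List.getD_cons_succ, List.countP_cons]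
      by_cases hav : a < v
      · simp only [hav, decide_true, if_true, ih hL']
        omega
      · have hva : v ≤ a := not_lt.mp hav
        have h0 : L.countP (fun x => decide (x < v)) = 0 :=
          List.countP_eq_zero.mpr (fun x hx => by
            simp only [decide_eq_true_eq]
            exact not_lt.mpr (hva.trans (ha x hx)))
        have hle : v ≤ L.getD i ⊤ := by
          rcases lt_or_ge i L.length with hi | hi
          · rw [List.getD_eq_getElem _ _ hi]
            exact hva.trans (ha _ (List.getElem_mem _))
          · rw [List.getD_eq_default _ _ hi]
            exact le_top
        simpa [h0, hav, ← List.getD_eq_getElem?_getD] using hle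

private lemma rank_count {n k : ℕ} (s : Fin n → WithTop ℝ) (hk : k ≤ n) :
    k ≤ (Finset.univ.filter fun i : Fin n =>
      (Finset.univ.filter fun j => s j < s i).card ≤ k - 1).card := by
  classical
  rcases Nat.eq_zero_or_pos k with rfl | hk0
  · exact Nat.zero_le _
  have hmono := Tuple.monotone_sort s
  set σ := Tuple.sort s with hσ
  have key : ∀ m : Fin n, (m : ℕ) < k →
      (Finset.univ.filter fun j => s j < s (σ m)).card ≤ k - 1 := by
    intro m hm
    have hsub : (Finset.univ.filter fun j => s j < s (σ m)).card ≤ (Finset.Iio m).card := by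
      apply Finset.card_le_card_of_injOn (fun j => σ.symm j)
      · intro j hj
        rw [Finset.mem_coe, Finset.mem_filter] at hj
        rw [Finset.mem_coe, Finset.mem_Iio]
        by_contra hcon
        have h2 : (s ∘ σ) m ≤ (s ∘ σ) (σ.symm j) := hmono (not_lt.mp hcon)
        simp only [Function.comp_apply, Equiv.apply_symm_apply] at h2
        exact absurd hj.2 (not_lt.mpr h2)
      · exact Set.injOn_of_injective σ.symm.injective
    rw [Fin.card_Iio] at hsub
    omega
  calc k = (Finset.univ : Finset (Fin k)).card := by simp
  _ ≤ _ := by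
      apply Finset.card_le_card_of_injOn (fun m : Fin k => σ (Fin.castLE hk m))
      · intro m _
        exact Finset.mem_filter.mpr ⟨Finset.mem_univ _, key _ (by simpa using m.2)⟩
      · exact Set.injOn_of_injective (σ.injective.comp (Fin.castLE_injective hk))

/-- **marginal validity of split conformal prediction on sampled candidate
pools.** Let `𝒜` be a countable discrete type of answer units, `X`, `Y` measurable
spaces of questions and ground-truth answers, `A : X → Finset 𝒜` a measurable
candidate-set map, `F : 𝒜 × X → ℝ` a measurable reliability score, and `adm` a
measurable admissibility relation. Let `(X_1,Y_1), …, (X_{N+1},Y_{N+1})` be an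
exchangeable sequence of random pairs such that almost surely `A*(X_i,Y_i) ≠ ∅` for all
`i`. With nonconformity scores `s_i = 1 - max_{a ∈ A*(X_i,Y_i)} F (a, X_i)`,
`α ∈ (0,1)`, `k = ⌈(N+1)(1-α)⌉`, and `q̂_α` the `k`-th smallest value of
`{s_1, …, s_N, ∞}`, the conformal prediction set
`Ĉ_α(X_{N+1}) = {a ∈ A (X_{N+1}) : 1 - F (a, X_{N+1}) ≤ q̂_α}` contains an admissible
answer with probability at least `1 - α`. -/
theorem split_conformal_marginal_validity
    {𝒜 : Type*} [Countable 𝒜] [MeasurableSpace 𝒜] [DiscreteMeasurableSpace 𝒜]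
    [MeasurableSpace (Finset 𝒜)] [DiscreteMeasurableSpace (Finset 𝒜)]
    {X Y : Type*} [MeasurableSpace X] [MeasurableSpace Y]
    (A : X → Finset 𝒜) (hA : Measurable A)
    (F : 𝒜 × X → ℝ) (hF : Measurable F)
    (adm : 𝒜 → Y → Prop) [∀ a y, Decidable (adm a y)]
    (hadm : MeasurableSet {p : 𝒜 × Y | adm p.1 p.2})
    {Ω : Type*} [MeasurableSpace Ω] (P : Measure Ω) [IsProbabilityMeasure P]
    (N : ℕ) (Z : Ω → Fin (N + 1) → X × Y) (hZ : Measurable Z)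
    (hexch : Exchangeable P Z)
    (hnonempty : ∀ᵐ ω ∂P, ∀ i : Fin (N + 1),
      (admissibleSet A adm (Z ω i).1 (Z ω i).2).Nonempty)
    (α : ℝ) (hα : α ∈ Set.Ioo (0 : ℝ) 1)
    (k : ℕ) (hk : k = ⌈((N : ℝ) + 1) * (1 - α)⌉₊) :
    ENNReal.ofReal (1 - α) ≤
      P {ω | ∃ a ∈ A (Z ω (Fin.last N)).1, adm a (Z ω (Fin.last N)).2 ∧
          ((1 - F (a, (Z ω (Fin.last N)).1) : ℝ) : WithTop ℝ) ≤
            orderStat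
              (Function.update
                (fun i : Fin (N + 1) => ncScore A F adm (Z ω i).1 (Z ω i).2)
                (Fin.last N) ⊤) k} := by
  classical
  obtain ⟨hα0, hα1⟩ := hα
  have h1α : (0:ℝ) < 1 - α := by linarith
  have hk1 : 1 ≤ k := by
    rw [hk]
    exact Nat.ceil_pos.mpr (by positivity)
  have hkN : k ≤ N + 1 := by
    rw [hk]
    apply Nat.ceil_le.mpr
    have : ((N:ℝ) + 1) * (1 - α) ≤ (N:ℝ) + 1 := by nlinarith
    calc ((N:ℝ) + 1) * (1 - α) ≤ (N:ℝ) + 1 := this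
    _ = ((N + 1 : ℕ) : ℝ) := by push_cast; ring
  -- pieces
  set B : Set (X × Y) := {p | (admissibleSet A adm p.1 p.2).Nonempty} with hB
  set g : X × Y → ℝ := fun p =>
    if h : (admissibleSet A adm p.1 p.2).Nonempty then
      1 - (admissibleSet A adm p.1 p.2).sup' h fun a => F (a, p.1)
    else 0 with hg
  have hscore : ∀ p : X × Y,
      ncScore A F adm p.1 p.2 = if p ∈ B then ((g p : ℝ) : WithTop ℝ) else ⊤ := by
    intro p
    have hmem : p ∈ B ↔ (admissibleSet A adm p.1 p.2).Nonempty := Iff.rfl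
    by_cases h : (admissibleSet A adm p.1 p.2).Nonempty
    · rw [ncScore, dif_pos h, if_pos (hmem.mpr h), hg]
      simp only [dif_pos h]
    · rw [ncScore, dif_neg h, if_neg (fun hc => h (hmem.mp hc))]
  have hmA : ∀ a : 𝒜, MeasurableSet {p : X × Y | a ∈ A p.1} := fun a =>
    (hA.comp measurable_fst) (MeasurableSet.of_discrete (s := {T : Finset 𝒜 | a ∈ T}))
  have hmadm : ∀ a : 𝒜, MeasurableSet {p : X × Y | adm a p.2} := fun a =>
    (measurable_const.prodMk measurable_snd) hadm
  have hmB : MeasurableSet B := by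
    have hBeq : B = ⋃ a : 𝒜, ({p : X × Y | a ∈ A p.1} ∩ {p | adm a p.2}) := by
      ext p
      simp [hB, admissibleSet, Finset.filter_nonempty_iff]
    rw [hBeq]
    exact MeasurableSet.iUnion fun a => (hmA a).inter (hmadm a)
  have hmAdmSet : ∀ S : Finset 𝒜,
      MeasurableSet {p : X × Y | admissibleSet A adm p.1 p.2 = S} := by
    intro S
    have heq : {p : X × Y | admissibleSet A adm p.1 p.2 = S} =
        ⋂ a : 𝒜, {p : X × Y | a ∈ S ↔ (a ∈ A p.1 ∧ adm a p.2)} := by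
      ext p
      simp only [Set.mem_setOf_eq, Set.mem_iInter]
      constructor
      · intro h a
        rw [← h, admissibleSet, Finset.mem_filter]
      · intro h
        ext a
        rw [admissibleSet, Finset.mem_filter]
        exact (h a).symm
    rw [heq]
    refine MeasurableSet.iInter fun a => ?_
    rcases Classical.em (a ∈ S) with ha | ha
    · have : {p : X × Y | a ∈ S ↔ (a ∈ A p.1 ∧ adm a p.2)} =
          {p : X × Y | a ∈ A p.1} ∩ {p | adm a p.2} := by
        ext p; simp [ha]
      rw [this]; exact (hmA a).inter (hmadm a)
    · have : {p : X × Y | a ∈ S ↔ (a ∈ A p.1 ∧ adm a p.2)} =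
          ({p : X × Y | a ∈ A p.1} ∩ {p | adm a p.2})ᶜ := by
        ext p
        simp only [Set.mem_setOf_eq, Set.mem_compl_iff, Set.mem_inter_iff, ha, false_iff,
          not_and]
      rw [this]; exact ((hmA a).inter (hmadm a)).compl
  have hgS : ∀ S : Finset 𝒜, Measurable fun p : X × Y =>
      (if h : S.Nonempty then 1 - S.sup' h (fun a => F (a, p.1)) else 0) := by
    intro S
    by_cases h : S.Nonempty
    · simp only [dif_pos h]
      have hsup : Measurable (S.sup' h (fun a (p : X × Y) => F (a, p.1))) :=
        Finset.measurable_sup' h fun a _ => hF.comp (measurable_const.prodMk measurable_fst)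
      have heq : (fun p : X × Y => S.sup' h (fun a => F (a, p.1))) =
          S.sup' h (fun a (p : X × Y) => F (a, p.1)) := by
        ext p
        rw [Finset.sup'_apply]
      exact measurable_const.sub (heq ▸ hsup)
    · simp only [dif_neg h]; exact measurable_const
  have hmg : Measurable g := by
    intro s hs
    have heq : g ⁻¹' s = ⋃ S : Finset 𝒜,
        ({p : X × Y | admissibleSet A adm p.1 p.2 = S} ∩
          (fun p : X × Y =>
            if h : S.Nonempty then 1 - S.sup' h (fun a => F (a, p.1)) else 0) ⁻¹' s) := by
      ext p
      simp only [Set.mem_preimage, Set.mem_iUnion, Set.mem_inter_iff, Set.mem_setOf_eq]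
      constructor
      · intro hp
        exact ⟨admissibleSet A adm p.1 p.2, rfl, hp⟩
      · rintro ⟨S, hS, hp⟩
        rw [hg]
        simp only
        rw [hS]
        exact hp
    rw [heq]
    exact MeasurableSet.iUnion fun S => (hmAdmSet S).inter (hgS S hs)
  -- measurability of comparison sets on the product space
  have hlt : ∀ i j : Fin (N + 1), MeasurableSet
      {z : Fin (N + 1) → X × Y |
        ncScore A F adm (z j).1 (z j).2 < ncScore A F adm (z i).1 (z i).2} := by
    intro i j
    have hej : Measurable fun z : Fin (N + 1) → X × Y => z j := measurable_pi_apply j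
    have hei : Measurable fun z : Fin (N + 1) → X × Y => z i := measurable_pi_apply i
    have hset : {z : Fin (N + 1) → X × Y |
          ncScore A F adm (z j).1 (z j).2 < ncScore A F adm (z i).1 (z i).2} =
        ((fun z : Fin (N + 1) → X × Y => z j) ⁻¹' B) ∩
          ((((fun z : Fin (N + 1) → X × Y => z i) ⁻¹' B)ᶜ) ∪
            {z : Fin (N + 1) → X × Y | g (z j) < g (z i)}) := by
      ext z
      simp only [Set.mem_setOf_eq, Set.mem_inter_iff, Set.mem_union, Set.mem_compl_iff,
        Set.mem_preimage]
      rw [hscore (z j), hscore (z i)]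
      by_cases hj : z j ∈ B <;> by_cases hi : z i ∈ B <;>
        simp [hj, hi, WithTop.coe_lt_coe, WithTop.coe_lt_top, not_top_lt]
    rw [hset]
    exact (hej hmB).inter (((hei hmB).compl).union
      (measurableSet_lt (hmg.comp hej) (hmg.comp hei)))
  -- the rank events
  set Gset : Fin (N + 1) → Set (Fin (N + 1) → X × Y) := fun i =>
    {z | (Finset.univ.filter fun j =>
      ncScore A F adm (z j).1 (z j).2 < ncScore A F adm (z i).1 (z i).2).card ≤ k - 1}
    with hGset
  have hmG : ∀ i, MeasurableSet (Gset i) := by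
    intro i
    have hcount : Measurable fun z : Fin (N + 1) → X × Y =>
        ∑ j : Fin (N + 1),
          if ncScore A F adm (z j).1 (z j).2 < ncScore A F adm (z i).1 (z i).2
          then 1 else 0 :=
      Finset.measurable_sum _ fun j _ =>
        Measurable.ite (hlt i j) measurable_const measurable_const
    have heq : Gset i = (fun z : Fin (N + 1) → X × Y =>
        ∑ j : Fin (N + 1),
          if ncScore A F adm (z j).1 (z j).2 < ncScore A F adm (z i).1 (z i).2
          then 1 else 0) ⁻¹' (Set.Iic (k - 1)) := by
      ext z
      simp only [hGset, Set.mem_setOf_eq, Set.mem_preimage, Set.mem_Iic, Finset.card_filter]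
    rw [heq]
    exact hcount MeasurableSet.of_discrete
  have hEmeas : ∀ i, MeasurableSet (Z ⁻¹' Gset i) := fun i => hZ (hmG i)
  -- exchangeability: all rank events have the same probability
  have hPeq : ∀ i : Fin (N + 1), P (Z ⁻¹' Gset i) = P (Z ⁻¹' Gset (Fin.last N)) := by
    intro i
    set σ := Equiv.swap i (Fin.last N) with hσ
    have hZσ : Measurable fun ω => Z ω ∘ σ :=
      measurable_pi_iff.mpr fun j => (measurable_pi_apply (σ j)).comp hZ
    have hpre : Z ⁻¹' Gset i = (fun ω => Z ω ∘ σ) ⁻¹' Gset (Fin.last N) := by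
      ext ω
      simp only [Set.mem_preimage, hGset, Set.mem_setOf_eq, Function.comp_apply]
      have hlast : σ (Fin.last N) = i := Equiv.swap_apply_right _ _
      simp only [hlast]
      have hcard : (Finset.univ.filter fun j => ncScore A F adm (Z ω (σ j)).1 (Z ω (σ j)).2 <
            ncScore A F adm (Z ω i).1 (Z ω i).2).card =
          (Finset.univ.filter fun j => ncScore A F adm (Z ω j).1 (Z ω j).2 <
            ncScore A F adm (Z ω i).1 (Z ω i).2).card := by
        apply Finset.card_equiv σ
        intro j
        simp [Finset.mem_filter]
      rw [hcard]
    rw [hpre]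
    calc P ((fun ω => Z ω ∘ σ) ⁻¹' Gset (Fin.last N))
        = Measure.map (fun ω => Z ω ∘ σ) P (Gset (Fin.last N)) :=
          (Measure.map_apply hZσ (hmG _)).symm
      _ = Measure.map Z P (Gset (Fin.last N)) := by rw [hexch σ]
      _ = P (Z ⁻¹' Gset (Fin.last N)) := Measure.map_apply hZ (hmG _)
  -- summing indicators
  have hsum : (k : ENNReal) ≤ ∑ i : Fin (N + 1), P (Z ⁻¹' Gset i) := by
    have hpt : ∀ ω, (k : ENNReal) ≤
        ∑ i : Fin (N + 1), (Z ⁻¹' Gset i).indicator (fun _ => (1 : ENNReal)) ω := by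
      intro ω
      have hcard := rank_count (fun j => ncScore A F adm (Z ω j).1 (Z ω j).2) hkN
      calc (k : ENNReal)
          ≤ ((Finset.univ.filter fun i : Fin (N + 1) =>
              (Finset.univ.filter fun j => ncScore A F adm (Z ω j).1 (Z ω j).2 <
                ncScore A F adm (Z ω i).1 (Z ω i).2).card ≤ k - 1).card : ENNReal) := by
            exact_mod_cast hcard
        _ = ∑ i : Fin (N + 1), (Z ⁻¹' Gset i).indicator (fun _ => (1 : ENNReal)) ω := by
            rw [Finset.card_filter]
            push_cast
            refine Finset.sum_congr rfl fun i _ => ?_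
            by_cases hi : ω ∈ Z ⁻¹' Gset i
            · have : (Finset.univ.filter fun j => ncScore A F adm (Z ω j).1 (Z ω j).2 <
                  ncScore A F adm (Z ω i).1 (Z ω i).2).card ≤ k - 1 := hi
              simp [Set.indicator_apply, hi, this]
            · have : ¬ (Finset.univ.filter fun j => ncScore A F adm (Z ω j).1 (Z ω j).2 <
                  ncScore A F adm (Z ω i).1 (Z ω i).2).card ≤ k - 1 := hi
              simp [Set.indicator_apply, hi, this]
    calc (k : ENNReal) = ∫⁻ _, (k : ENNReal) ∂P := by simp
      _ ≤ ∫⁻ ω, ∑ i : Fin (N + 1), (Z ⁻¹' Gset i).indicator (fun _ => (1 : ENNReal)) ω ∂P :=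
          lintegral_mono hpt
      _ = ∑ i : Fin (N + 1), ∫⁻ ω, (Z ⁻¹' Gset i).indicator (fun _ => (1 : ENNReal)) ω ∂P :=
          lintegral_finset_sum _ fun i _ => measurable_const.indicator (hEmeas i)
      _ = ∑ i : Fin (N + 1), P (Z ⁻¹' Gset i) := by
          refine Finset.sum_congr rfl fun i _ => ?_
          rw [lintegral_indicator_const (hEmeas i), one_mul]
  have hconst : ∑ i : Fin (N + 1), P (Z ⁻¹' Gset i) =
      ((N : ENNReal) + 1) * P (Z ⁻¹' Gset (Fin.last N)) := by
    rw [Finset.sum_congr rfl fun i _ => hPeq i, Finset.sum_const, Finset.card_univ,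
      Fintype.card_fin, nsmul_eq_mul]
    push_cast
    ring
  have hptarget : ENNReal.ofReal (1 - α) ≤ P (Z ⁻¹' Gset (Fin.last N)) := by
    have hNtop : ((N : ENNReal) + 1) ≠ ⊤ := by
      simp
    have hN0 : ((N : ENNReal) + 1) ≠ 0 := by
      simp
    have h1 : ((N : ENNReal) + 1) * ENNReal.ofReal (1 - α) ≤
        ((N : ENNReal) + 1) * P (Z ⁻¹' Gset (Fin.last N)) := by
      calc ((N : ENNReal) + 1) * ENNReal.ofReal (1 - α)
          = ENNReal.ofReal (((N : ℝ) + 1) * (1 - α)) := by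
            rw [ENNReal.ofReal_mul (by positivity)]
            congr 1
            rw [← ENNReal.ofReal_natCast N, ← ENNReal.ofReal_one,
              ← ENNReal.ofReal_add (by positivity) (by norm_num)]
        _ ≤ (k : ENNReal) := by
            rw [← ENNReal.ofReal_natCast k]
            exact ENNReal.ofReal_le_ofReal (hk ▸ Nat.le_ceil _)
        _ ≤ ∑ i : Fin (N + 1), P (Z ⁻¹' Gset i) := hsum
        _ = ((N : ENNReal) + 1) * P (Z ⁻¹' Gset (Fin.last N)) := hconst
    exact (ENNReal.mul_le_mul_iff_right hN0 hNtop).mp h1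
  -- the target event contains the rank event intersected with the a.s. set
  have hincl : Z ⁻¹' Gset (Fin.last N) ∩
      {ω | ∀ i : Fin (N + 1), (admissibleSet A adm (Z ω i).1 (Z ω i).2).Nonempty} ⊆
      {ω | ∃ a ∈ A (Z ω (Fin.last N)).1, adm a (Z ω (Fin.last N)).2 ∧
          ((1 - F (a, (Z ω (Fin.last N)).1) : ℝ) : WithTop ℝ) ≤
            orderStat
              (Function.update
                (fun i : Fin (N + 1) => ncScore A F adm (Z ω i).1 (Z ω i).2)
                (Fin.last N) ⊤) k} := by
    rintro ω ⟨hE, hS⟩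
    have hne := hS (Fin.last N)
    obtain ⟨a, haS, hsup⟩ :=
      Finset.exists_mem_eq_sup' hne (fun a => F (a, (Z ω (Fin.last N)).1))
    have haS' := haS
    rw [admissibleSet, Finset.mem_filter] at haS'
    refine ⟨a, haS'.1, haS'.2, ?_⟩
    set s0 : Fin (N + 1) → WithTop ℝ :=
      fun i => ncScore A F adm (Z ω i).1 (Z ω i).2 with hs0
    set t := Function.update s0 (Fin.last N) ⊤ with ht
    set v : WithTop ℝ := ((1 - F (a, (Z ω (Fin.last N)).1) : ℝ) : WithTop ℝ) with hv
    have hvlast : s0 (Fin.last N) = v := by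
      rw [hs0]
      simp only
      rw [ncScore, dif_pos hne, hsup, hv]
    set L := ((Multiset.map t Finset.univ.val).sort (· ≤ ·)) with hL
    have hsorted : L.Pairwise (· ≤ ·) := Multiset.pairwise_sort _ _
    have hiff := sorted_getD_iff L hsorted v (k - 1)
    have hcount : L.countP (fun x => decide (x < v)) =
        (Finset.univ.filter fun j => t j < v).card := by
      have h1 : (L.countP fun x => decide (x < v)) =
          Multiset.countP (fun x => x < v) (Multiset.map t Finset.univ.val) := by
        rw [← Multiset.coe_countP, hL, Multiset.sort_eq]
      rw [h1, Multiset.countP_map]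
      rfl
    have hle2 : (Finset.univ.filter fun j => t j < v).card ≤ k - 1 := by
      have hEc : (Finset.univ.filter fun j => s0 j < s0 (Fin.last N)).card ≤ k - 1 := hE
      refine le_trans (Finset.card_le_card ?_) hEc
      intro j hj
      rw [Finset.mem_filter] at hj ⊢
      refine ⟨Finset.mem_univ _, ?_⟩
      rcases eq_or_ne j (Fin.last N) with rfl | hjne
      · rw [ht, Function.update_self] at hj
        exact absurd hj.2 not_top_lt
      · rw [ht, Function.update_of_ne hjne] at hj
        rw [hvlast]
        exact hj.2
    show v ≤ orderStat t k
    rw [orderStat]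
    exact hiff.mpr (hcount ▸ hle2)
  have hScompl :
      P {ω | ∀ i : Fin (N + 1), (admissibleSet A adm (Z ω i).1 (Z ω i).2).Nonempty}ᶜ = 0 := by
    rw [Set.compl_setOf]
    exact ae_iff.mp hnonempty
  calc ENNReal.ofReal (1 - α) ≤ P (Z ⁻¹' Gset (Fin.last N)) := hptarget
    _ = P (Z ⁻¹' Gset (Fin.last N) ∩
        {ω | ∀ i : Fin (N + 1), (admissibleSet A adm (Z ω i).1 (Z ω i).2).Nonempty}) :=
        (measure_inter_conull hScompl).symm
    _ ≤ _ := measure_mono hincl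
end
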